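/- arXiv:2604.10600 — 6 statements merged into one kernel-verified Lean document; each statement's English description precedes it below -/
import Mathlib

section
/- For every natural number p and every real polynomial q of degree at most p, the squared value of q at the endpoint 0 of the unit interval satisfies q(0)² ≤ (p+1)² · ∫₀¹ q(x)² dx. -/
/-!
The evaluation `q ↦ q(0)` on polynomials of degree `≤ p`, with the `L²(0,1)` inner product, is
represented by the kernel `K = ∑_{k ≤ p} (2k+1) Pₖ`, where `Pₖ` are the shifted Legendre
polynomials: they are orthogonal (Rodrigues' formula and `k` integrations by parts),
`Pₖ(0) = 1` and `‖Pₖ‖² = 1/(2k+1)`. Hence `‖K‖² = K(0) = ∑_{k ≤ p} (2k+1) = (p+1)²`, and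
Cauchy–Schwarz gives `q(0)² = ⟪K, q⟫² ≤ (p+1)² ‖q‖²`.
-/

open Polynomial

namespace Polynomial

noncomputable def unitIntervalL2 : LinearMap.BilinForm ℝ ℝ[X] :=
  LinearMap.mk₂ ℝ (fun f g => ∫ x in (0 : ℝ)..1, f.eval x * g.eval x)
    (fun f₁ f₂ g => by
      simp only [eval_add, add_mul]
      exact intervalIntegral.integral_add
        (Continuous.intervalIntegrable (by fun_prop) _ _)
        (Continuous.intervalIntegrable (by fun_prop) _ _))
    (fun c f g => by simp [mul_assoc])
    (fun f g₁ g₂ => by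
      simp only [eval_add, mul_add]
      exact intervalIntegral.integral_add
        (Continuous.intervalIntegrable (by fun_prop) _ _)
        (Continuous.intervalIntegrable (by fun_prop) _ _))
    (fun c f g => by simp [mul_left_comm])

lemma unitIntervalL2_apply (f g : ℝ[X]) :
    unitIntervalL2 f g = ∫ x in (0 : ℝ)..1, f.eval x * g.eval x := rfl

lemma unitIntervalL2_comm (f g : ℝ[X]) : unitIntervalL2 f g = unitIntervalL2 g f := by
  simp only [unitIntervalL2_apply, mul_comm]

lemma unitIntervalL2_self_nonneg (f : ℝ[X]) : 0 ≤ unitIntervalL2 f f :=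
  intervalIntegral.integral_nonneg zero_le_one fun _ _ => mul_self_nonneg _

lemma unitIntervalL2_X_mul_left (f g : ℝ[X]) :
    unitIntervalL2 (X * f) g = unitIntervalL2 f (X * g) := by
  simp only [unitIntervalL2_apply, eval_mul, eval_X, mul_left_comm, mul_assoc]

lemma unitIntervalL2_derivative_left (f g : ℝ[X]) :
    unitIntervalL2 (derivative f) g =
      f.eval 1 * g.eval 1 - f.eval 0 * g.eval 0 - unitIntervalL2 f (derivative g) := by
  have := intervalIntegral.integral_mul_deriv_eq_deriv_mul (a := 0) (b := 1)
    (fun x _ => f.hasDerivAt x) (fun x _ => g.hasDerivAt x)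
    (Continuous.intervalIntegrable (by fun_prop) _ _)
    (Continuous.intervalIntegrable (by fun_prop) _ _)
  rw [unitIntervalL2_apply, unitIntervalL2_apply]
  linarith

lemma unitIntervalL2_iterate_derivative_left {k : ℕ} {f : ℝ[X]}
    (h₀ : ∀ i < k, (derivative^[i] f).IsRoot 0) (h₁ : ∀ i < k, (derivative^[i] f).IsRoot 1)
    (g : ℝ[X]) :
    unitIntervalL2 (derivative^[k] f) g = (-1) ^ k * unitIntervalL2 f (derivative^[k] g) := by
  induction k generalizing g with
  | zero => simp
  | succ k ih =>
    rw [Function.iterate_succ_apply', unitIntervalL2_derivative_left, h₀ k k.lt_succ_self,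
      h₁ k k.lt_succ_self, ih (fun i hi => h₀ i (hi.trans k.lt_succ_self))
        (fun i hi => h₁ i (hi.trans k.lt_succ_self)), ← Function.iterate_succ_apply]
    ring

lemma isRoot_iterate_derivative_of_pow_dvd {R : Type*} [CommRing R] {p : R[X]} {a : R}
    {n i : ℕ} (h : (X - C a) ^ n ∣ p) (hi : i < n) : (derivative^[i] p).IsRoot a :=
  dvd_iff_isRoot.mp <| (dvd_pow_self _ (Nat.sub_ne_zero_of_lt hi)).trans
    (pow_sub_dvd_iterate_derivative_of_pow_dvd i h)

lemma coeff_X_mul_derivative {R : Type*} [Semiring R] (p : R[X]) (n : ℕ) :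
    (X * derivative p).coeff n = n * p.coeff n := by
  cases n with
  | zero => simp
  | succ n => rw [coeff_X_mul, coeff_derivative, Nat.cast_comm]; push_cast; rfl

noncomputable def shiftedLegendreSeq : Sequence ℝ where
  elems' n := (shiftedLegendre n).map (Int.castRingHom ℝ)
  degree_eq' n := by
    rw [degree_map_eq_of_injective (RingHom.injective_int _), degree_shiftedLegendre]

lemma shiftedLegendreSeq_apply (n : ℕ) :
    shiftedLegendreSeq n = (shiftedLegendre n).map (Int.castRingHom ℝ) := rfl

lemma shiftedLegendreSeq_eval_zero (n : ℕ) : (shiftedLegendreSeq n).eval 0 = 1 := by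
  simp [shiftedLegendreSeq_apply, ← coeff_zero_eq_eval_zero, coeff_shiftedLegendre]

lemma shiftedLegendreSeq_eval_one (n : ℕ) : (shiftedLegendreSeq n).eval 1 = (-1) ^ n := by
  rw [shiftedLegendreSeq_apply, ← algebraMap_int_eq, eval_map_algebraMap,
    shiftedLegendre_eval_symm, sub_self, ← eval_map_algebraMap, algebraMap_int_eq,
    ← shiftedLegendreSeq_apply, shiftedLegendreSeq_eval_zero, mul_one]

lemma factorial_smul_shiftedLegendreSeq (n : ℕ) :
    (n.factorial : ℝ) • shiftedLegendreSeq n = derivative^[n] (X ^ n * (1 - X) ^ n) := by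
  have := congrArg (map (Int.castRingHom ℝ)) (factorial_mul_shiftedLegendre_eq n)
  simpa [← iterate_derivative_map, ← shiftedLegendreSeq_apply, smul_eq_C_mul] using this

lemma unitIntervalL2_shiftedLegendreSeq_of_degree_lt {n : ℕ} {g : ℝ[X]} (hg : g.degree < n) :
    unitIntervalL2 (shiftedLegendreSeq n) g = 0 := by
  have hdvd₀ : (X - C 0) ^ n ∣ X ^ n * (1 - X : ℝ[X]) ^ n := by simp
  have hdvd₁ : (X - C 1) ^ n ∣ X ^ n * (1 - X : ℝ[X]) ^ n := by
    refine Dvd.dvd.mul_left ?_ _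
    rw [show (1 - X : ℝ[X]) = -(X - C 1) by simp, neg_pow]
    exact dvd_mul_left _ _
  have h := unitIntervalL2_iterate_derivative_left
    (fun _ hi => isRoot_iterate_derivative_of_pow_dvd hdvd₀ hi)
    (fun _ hi => isRoot_iterate_derivative_of_pow_dvd hdvd₁ hi) g
  rw [← factorial_smul_shiftedLegendreSeq, iterate_derivative_eq_zero_of_degree_lt hg, map_zero,
    mul_zero, map_smul, LinearMap.smul_apply, smul_eq_mul] at h
  exact (mul_eq_zero.mp h).resolve_left (by positivity)

lemma unitIntervalL2_shiftedLegendreSeq_self (n : ℕ) :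
    unitIntervalL2 (shiftedLegendreSeq n) (shiftedLegendreSeq n) = 1 / (2 * n + 1) := by
  set P := shiftedLegendreSeq n
  have hdeg : (X * derivative P - (n : ℝ) • P).degree < ↑n := by
    rw [degree_lt_iff_coeff_zero]
    intro m hm
    rw [coeff_sub, coeff_X_mul_derivative, coeff_smul, smul_eq_mul, ← sub_mul]
    rcases hm.eq_or_lt with rfl | hlt
    · rw [sub_self, zero_mul]
    · rw [coeff_eq_zero_of_natDegree_lt (by simpa [P] using hlt), mul_zero]
  -- `x P' = n P + (lower degree)`, while integrating `x (P²)'` by parts gives `1 - ‖P‖²`.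
  have hEuler : unitIntervalL2 P (X * derivative P) = n * unitIntervalL2 P P := by
    have h := unitIntervalL2_shiftedLegendreSeq_of_degree_lt hdeg
    rwa [map_sub, map_smul, smul_eq_mul, sub_eq_zero] at h
  have hparts : unitIntervalL2 (derivative P) (X * P) =
      1 - unitIntervalL2 P P - unitIntervalL2 P (X * derivative P) := by
    rw [unitIntervalL2_derivative_left, derivative_mul, derivative_X, one_mul, map_add]
    simp only [eval_mul, eval_X, shiftedLegendreSeq_eval_one, one_mul, ← mul_pow, neg_one_mul,
      neg_neg, one_pow, P]
    ring
  have hswap : unitIntervalL2 (derivative P) (X * P) = unitIntervalL2 P (X * derivative P) := by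
    rw [← unitIntervalL2_X_mul_left, unitIntervalL2_comm]
  rw [eq_div_iff (by positivity)]
  linarith

lemma unitIntervalL2_shiftedLegendreSeq (j k : ℕ) :
    unitIntervalL2 (shiftedLegendreSeq j) (shiftedLegendreSeq k) =
      if j = k then (1 / (2 * k + 1) : ℝ) else 0 := by
  rcases lt_trichotomy j k with h | rfl | h
  · rw [if_neg h.ne, unitIntervalL2_comm]
    exact unitIntervalL2_shiftedLegendreSeq_of_degree_lt (by simpa using h)
  · rw [if_pos rfl, unitIntervalL2_shiftedLegendreSeq_self]
  · rw [if_neg h.ne']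
    exact unitIntervalL2_shiftedLegendreSeq_of_degree_lt (g := shiftedLegendreSeq k)
      (by simpa using h)

noncomputable def evalZeroKernel (n : ℕ) : ℝ[X] :=
  ∑ k ∈ Finset.range n, (2 * k + 1 : ℝ) • shiftedLegendreSeq k

lemma evalZeroKernel_mem_degreeLT (n : ℕ) : evalZeroKernel n ∈ degreeLT ℝ n :=
  Submodule.sum_mem _ fun k hk =>
    Submodule.smul_mem _ _ (mem_degreeLT.mpr (by simpa using Finset.mem_range.mp hk))

lemma evalZeroKernel_eval_zero (n : ℕ) : (evalZeroKernel n).eval 0 = n ^ 2 := by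
  induction n with
  | zero => simp [evalZeroKernel]
  | succ n ih =>
    rw [evalZeroKernel, Finset.sum_range_succ, eval_add, ← evalZeroKernel, ih, eval_smul,
      shiftedLegendreSeq_eval_zero]
    push_cast
    ring

lemma unitIntervalL2_evalZeroKernel {n : ℕ} {q : ℝ[X]} (hq : q ∈ degreeLT ℝ n) :
    unitIntervalL2 (evalZeroKernel n) q = q.eval 0 := by
  have hspan := shiftedLegendreSeq.span_degreeLT (m := n) fun i _ =>
    isUnit_iff_ne_zero.mpr (leadingCoeff_ne_zero.mpr (shiftedLegendreSeq.ne_zero i))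
  refine LinearMap.eqOn_span (f := unitIntervalL2 (evalZeroKernel n)) (g := leval 0) ?_
    (hspan ▸ hq)
  rintro _ ⟨k, hk, rfl⟩
  have : (2 * k + 1 : ℝ) ≠ 0 := by positivity
  simp [evalZeroKernel, unitIntervalL2_shiftedLegendreSeq, shiftedLegendreSeq_eval_zero,
    Set.mem_Iio.mp hk, this]

end Polynomial

/-- One-dimensional endpoint trace inequality for polynomials: for a real polynomial `q`
of degree at most `p`, `q(0)² ≤ (p+1)² ∫₀¹ q(x)² dx`. -/
theorem polynomial_endpoint_trace_inequality (p : ℕ) (q : Polynomial ℝ)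
    (hq : q.natDegree ≤ p) :
    (q.eval 0) ^ 2 ≤ ((p : ℝ) + 1) ^ 2 * ∫ x in (0 : ℝ)..1, (q.eval x) ^ 2 := by
  have hq' : q ∈ degreeLT ℝ (p + 1) :=
    mem_degreeLT.mpr (degree_le_natDegree.trans_lt (by exact_mod_cast Nat.lt_succ_of_le hq))
  have hK := evalZeroKernel_mem_degreeLT (p + 1)
  calc (q.eval 0) ^ 2 = unitIntervalL2 (evalZeroKernel (p + 1)) q ^ 2 := by
        rw [unitIntervalL2_evalZeroKernel hq']
    _ ≤ unitIntervalL2 (evalZeroKernel (p + 1)) (evalZeroKernel (p + 1)) * unitIntervalL2 q q :=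
        unitIntervalL2.apply_sq_le_of_symm unitIntervalL2_self_nonneg ⟨unitIntervalL2_comm⟩ _ _
    _ = ((p : ℝ) + 1) ^ 2 * ∫ x in (0 : ℝ)..1, (q.eval x) ^ 2 := by
        simp only [unitIntervalL2_evalZeroKernel hK, evalZeroKernel_eval_zero,
          unitIntervalL2_apply, sq, Nat.cast_add, Nat.cast_one]
end

section
/- Let V be a real vector space and V_hp ⊆ V a linear subspace. Let a₀ and j be symmetric positive-semidefinite bilinear forms on V, and for c ≥ 0 define the seminorm N_c(v) := sqrt(a₀(v,v) + c·j(v,v)). Let b : V × V → ℝ be bilinear, ℓ : V → ℝ linear, and let u ∈ V, U ∈ V_hp, δ > 1, η₀ > δ and ρ ≥ 0 satisfy: (i) coercivity: b(Ψ,Ψ) ≥ ((δ−1)/δ)·N_{η₀−δ}(Ψ)² for all Ψ ∈ V_hp; (ii) continuity: b(v,Ψ) ≤ 2·N_{η₀+1}(v)·N_{η₀+1}(Ψ) for all v ∈ V and Ψ ∈ V_hp; (iii) Galerkin equations: b(U,Φ) = ℓ(Φ) for all Φ ∈ V_hp; (iv) residual bound: |b(u,Φ) − ℓ(Φ)| ≤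 ρ·N₁(Φ) for all Φ ∈ V_hp. Then for every Φ ∈ V_hp one has N₁(u − U) ≤ (2·c_{δ,η₀} + 1)·N₁(u − Φ) + c_{δ,η₀}·ρ, where c_{δ,η₀} = (δ/(δ−1))·((η₀+1)/min(η₀−δ, 1)). -/
set_option maxHeartbeats 1000000

lemma cs_aux {V : Type*} [AddCommGroup V] [Module ℝ V]
    (B : V →ₗ[ℝ] V →ₗ[ℝ] ℝ) (hsym : ∀ v w, B v w = B w v) (hpos : ∀ v, 0 ≤ B v v)
    (v w : V) : B v w ≤ Real.sqrt (B v v) * Real.sqrt (B w w) := by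
  have hd : discrim (B v v) (2 * B v w) (B w w) ≤ 0 := by
    apply discrim_le_zero
    intro t
    have h := hpos (t • v + w)
    have hexp : B (t • v + w) (t • v + w)
        = B v v * t ^ 2 + 2 * B v w * t + B w w := by
      simp only [map_add, map_smul, LinearMap.add_apply, LinearMap.smul_apply,
        smul_eq_mul]
      rw [hsym w v]; ring
    linarith [hexp ▸ h]
  rw [discrim] at hd
  have h2 : (B v w) ^ 2 ≤ B v v * B w w := by nlinarith
  calc B v w ≤ |B v w| := le_abs_self _
    _ = Real.sqrt ((B v w) ^ 2) := by rw [Real.sqrt_sq_eq_abs]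
    _ ≤ Real.sqrt (B v v * B w w) := Real.sqrt_le_sqrt h2
    _ = Real.sqrt (B v v) * Real.sqrt (B w w) := Real.sqrt_mul (hpos v) _

lemma nitsche_arith_aux (δ η₀ ρ X Y : ℝ) (hδ : 1 < δ) (hη₀ : δ < η₀) (hρ : 0 ≤ ρ)
    (hX0 : 0 ≤ X) (hY0 : 0 ≤ Y)
    (hmain : ((δ - 1) / δ) * (min (η₀ - δ) 1) * X ^ 2 ≤ 2 * (η₀ + 1) * Y * X + ρ * X) :
    X ≤ 2 * ((δ / (δ - 1)) * ((η₀ + 1) / min (η₀ - δ) 1)) * Y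
        + ((δ / (δ - 1)) * ((η₀ + 1) / min (η₀ - δ) 1)) * ρ := by
  set m : ℝ := min (η₀ - δ) 1 with hm
  have hm0 : 0 < m := lt_min (by linarith) one_pos
  have hδ0 : (0:ℝ) < δ - 1 := by linarith
  have hδpos : (0:ℝ) < δ := by linarith
  set c₀ : ℝ := (δ / (δ - 1)) * ((η₀ + 1) / m) with hc₀
  rcases eq_or_lt_of_le hX0 with h0 | h0
  · rw [← h0]
    have : 0 < c₀ := mul_pos (div_pos hδpos hδ0) (div_pos (by linarith) hm0)
    positivity
  · have hmain' : (δ - 1) * m * X ^ 2 ≤ δ * ((2 * (η₀ + 1) * Y + ρ) * X) := by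
      have h := mul_le_mul_of_nonneg_left hmain hδpos.le
      have he : δ * (((δ - 1) / δ) * m * X ^ 2) = (δ - 1) * m * X ^ 2 := by
        field_simp
      nlinarith [h, he]
    have hA : (δ - 1) * m * X ≤ δ * (2 * (η₀ + 1) * Y + ρ) := by
      have h' : ((δ - 1) * m * X) * X ≤ (δ * (2 * (η₀ + 1) * Y + ρ)) * X := by
        nlinarith [hmain']
      exact le_of_mul_le_mul_right h' h0
    have hc₀m : c₀ * ((δ - 1) * m) = δ * (η₀ + 1) := by
      rw [hc₀]; field_simp
    have hmul : ((δ - 1) * m) * X ≤ ((δ - 1) * m) * (2 * c₀ * Y + c₀ * ρ) := by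
      have hδη : 0 ≤ δ * η₀ * ρ :=
        mul_nonneg (mul_nonneg hδpos.le (by linarith)) hρ
      nlinarith [hA, hc₀m, hδη]
    exact le_of_mul_le_mul_left hmul (by positivity)

/-- Abstract quasi-optimal convergence of the hp-Nitsche FE/BE coupling: given symmetric
positive-semidefinite bilinear forms `a₀`, `j` defining the seminorms
`N c v = sqrt(a₀(v,v) + c·j(v,v))`, a bilinear form `b` that is coercive and continuous
with respect to these seminorms, a discrete solution `U` of the Galerkin equations and a
residual bound `ρ` for the exact solution `u`, one has for all `Φ ∈ V_hp`:
`N₁(u − U) ≤ (2c_{δ,η₀} + 1) N₁(u − Φ) + c_{δ,η₀} ρ` with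
`c_{δ,η₀} = (δ/(δ−1))·((η₀+1)/min(η₀−δ,1))`. -/
theorem nitsche_quasi_optimal_convergence {V : Type*} [AddCommGroup V] [Module ℝ V]
    (Vhp : Submodule ℝ V)
    (a₀ j b : V →ₗ[ℝ] V →ₗ[ℝ] ℝ) (ℓ : V →ₗ[ℝ] ℝ)
    (ha₀sym : ∀ v w : V, a₀ v w = a₀ w v) (ha₀pos : ∀ v : V, 0 ≤ a₀ v v)
    (hjsym : ∀ v w : V, j v w = j w v) (hjpos : ∀ v : V, 0 ≤ j v v)
    (N : ℝ → V → ℝ) (hN : ∀ (c : ℝ) (v : V), N c v = Real.sqrt (a₀ v v + c * j v v))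
    (u U : V) (hU : U ∈ Vhp)
    (δ η₀ ρ : ℝ) (hδ : 1 < δ) (hη₀ : δ < η₀) (hρ : 0 ≤ ρ)
    (hcoer : ∀ Ψ ∈ Vhp, ((δ - 1) / δ) * (N (η₀ - δ) Ψ) ^ 2 ≤ b Ψ Ψ)
    (hcont : ∀ v : V, ∀ Ψ ∈ Vhp, b v Ψ ≤ 2 * N (η₀ + 1) v * N (η₀ + 1) Ψ)
    (hgal : ∀ Φ ∈ Vhp, b U Φ = ℓ Φ)
    (hres : ∀ Φ ∈ Vhp, |b u Φ - ℓ Φ| ≤ ρ * N 1 Φ) :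
    ∀ Φ ∈ Vhp,
      N 1 (u - U) ≤
        (2 * ((δ / (δ - 1)) * ((η₀ + 1) / min (η₀ - δ) 1)) + 1) * N 1 (u - Φ) +
          ((δ / (δ - 1)) * ((η₀ + 1) / min (η₀ - δ) 1)) * ρ := by
  intro Φ hΦ
  set m : ℝ := min (η₀ - δ) 1 with hm
  have hm0 : 0 < m := lt_min (by linarith) one_pos
  have hm1 : m ≤ 1 := min_le_right _ _
  have hmη : m ≤ η₀ - δ := min_le_left _ _
  have hδ0 : (0:ℝ) < δ - 1 := by linarith
  set c₀ : ℝ := (δ / (δ - 1)) * ((η₀ + 1) / m) with hc₀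
  have hc₀0 : 0 < c₀ := by
    apply mul_pos (div_pos (by linarith) hδ0) (div_pos (by linarith) hm0)
  -- B = a₀ + j, the form defining N 1
  set B : V →ₗ[ℝ] V →ₗ[ℝ] ℝ := a₀ + j with hB
  have hBapp : ∀ v w : V, B v w = a₀ v w + j v w := by
    intro v w; simp [hB, LinearMap.add_apply]
  have hBsym : ∀ v w, B v w = B w v := by
    intro v w; simp only [hBapp, ha₀sym v w, hjsym v w]
  have hBpos : ∀ v, 0 ≤ B v v := fun v => add_nonneg (ha₀pos v) (hjpos v)
  have hN1 : ∀ v, N 1 v = Real.sqrt (B v v) := by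
    intro v; rw [hN]; simp [hBapp]
  have hN1nonneg : ∀ v, 0 ≤ N 1 v := fun v => (hN1 v) ▸ Real.sqrt_nonneg _
  have hN1sq : ∀ v, (N 1 v) ^ 2 = B v v := by
    intro v; rw [hN1, Real.sq_sqrt (hBpos v)]
  -- triangle inequality for N 1
  have htri : ∀ v w : V, N 1 (v + w) ≤ N 1 v + N 1 w := by
    intro v w
    have hcs := cs_aux B hBsym hBpos v w
    have hexp : B (v + w) (v + w) = B v v + 2 * B v w + B w w := by
      simp only [map_add, LinearMap.add_apply]
      rw [hBsym w v]; ring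
    rw [hN1, hN1, hN1]
    rw [show Real.sqrt (B v v) + Real.sqrt (B w w)
        = Real.sqrt ((Real.sqrt (B v v) + Real.sqrt (B w w))^2) from
      (Real.sqrt_sq (by positivity)).symm]
    apply Real.sqrt_le_sqrt
    have h1 : Real.sqrt (B v v) ^ 2 = B v v := Real.sq_sqrt (hBpos v)
    have h2 : Real.sqrt (B w w) ^ 2 = B w w := Real.sq_sqrt (hBpos w)
    nlinarith
  set Ψ : V := U - Φ with hΨdef
  have hΨ : Ψ ∈ Vhp := Vhp.sub_mem hU hΦ
  set X : ℝ := N 1 Ψ with hX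
  set Y : ℝ := N 1 (u - Φ) with hY
  have hX0 : 0 ≤ X := hN1nonneg _
  have hY0 : 0 ≤ Y := hN1nonneg _
  -- comparison of seminorms
  have hlow : m * X ^ 2 ≤ (N (η₀ - δ) Ψ) ^ 2 := by
    have : (N (η₀ - δ) Ψ) ^ 2 = a₀ Ψ Ψ + (η₀ - δ) * j Ψ Ψ := by
      rw [hN, Real.sq_sqrt]
      have := ha₀pos Ψ; have := hjpos Ψ; nlinarith
    rw [this, hX, hN1sq, hBapp]
    nlinarith [mul_nonneg (sub_nonneg.mpr hm1) (ha₀pos Ψ),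
      mul_nonneg (sub_nonneg.mpr hmη) (hjpos Ψ)]
  have hup : ∀ v : V, (N (η₀ + 1) v) ^ 2 ≤ (η₀ + 1) * (N 1 v) ^ 2 := by
    intro v
    have h : (N (η₀ + 1) v) ^ 2 = a₀ v v + (η₀ + 1) * j v v := by
      rw [hN, Real.sq_sqrt]
      have := ha₀pos v; have := hjpos v; nlinarith
    rw [h, hN1sq, hBapp]
    nlinarith [mul_nonneg (show (0:ℝ) ≤ η₀ by linarith) (ha₀pos v)]
  have hupN : ∀ v : V, N (η₀ + 1) v ≤ Real.sqrt (η₀ + 1) * N 1 v := by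
    intro v
    have h0 : 0 ≤ N (η₀ + 1) v := by rw [hN]; exact Real.sqrt_nonneg _
    nlinarith [hup v, Real.sq_sqrt (show (0:ℝ) ≤ η₀ + 1 by linarith),
      Real.sqrt_nonneg (η₀ + 1), hN1nonneg v,
      mul_nonneg (Real.sqrt_nonneg (η₀ + 1)) (hN1nonneg v)]
  -- the key identity and estimate for b Ψ Ψ
  have hbident : b Ψ Ψ = b (u - Φ) Ψ - (b u Ψ - ℓ Ψ) := by
    simp only [hΨdef, map_sub, LinearMap.sub_apply, hgal (U - Φ) hΨ]
    have hgU := hgal (U - Φ) hΨ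
    simp only [map_sub, LinearMap.sub_apply] at hgU
    linarith
  have hbound : b Ψ Ψ ≤ 2 * (η₀ + 1) * Y * X + ρ * X := by
    rw [hbident]
    have h1 : b (u - Φ) Ψ ≤ 2 * N (η₀ + 1) (u - Φ) * N (η₀ + 1) Ψ :=
      hcont (u - Φ) Ψ hΨ
    have h2 : -(b u Ψ - ℓ Ψ) ≤ ρ * X := by
      have := hres Ψ hΨ
      have := abs_le.mp this
      linarith [this.1]
    have h3 := hupN (u - Φ)
    have h4 := hupN Ψ
    have hsq : Real.sqrt (η₀ + 1) * Real.sqrt (η₀ + 1) = η₀ + 1 := by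
      rw [← Real.sqrt_mul (by linarith), Real.sqrt_mul_self (by linarith)]
    have hNuΦ0 : 0 ≤ N (η₀ + 1) (u - Φ) := by rw [hN]; exact Real.sqrt_nonneg _
    have hNΨ0 : 0 ≤ N (η₀ + 1) Ψ := by rw [hN]; exact Real.sqrt_nonneg _
    have h5 : N (η₀ + 1) (u - Φ) * N (η₀ + 1) Ψ
        ≤ (Real.sqrt (η₀ + 1) * Y) * (Real.sqrt (η₀ + 1) * X) :=
      mul_le_mul h3 h4 hNΨ0 (by positivity)
    have h6 : (Real.sqrt (η₀ + 1) * Y) * (Real.sqrt (η₀ + 1) * X)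
        = (η₀ + 1) * (Y * X) := by rw [show (Real.sqrt (η₀ + 1) * Y) * (Real.sqrt (η₀ + 1) * X) = (Real.sqrt (η₀ + 1) * Real.sqrt (η₀ + 1)) * (Y * X) from by ring, hsq]
    nlinarith [h5, h6]
  have hmain : ((δ - 1) / δ) * m * X ^ 2 ≤ 2 * (η₀ + 1) * Y * X + ρ * X := by
    have hc := hcoer Ψ hΨ
    have hpos : (0:ℝ) < (δ - 1) / δ := div_pos hδ0 (by linarith)
    calc ((δ - 1) / δ) * m * X ^ 2 ≤ ((δ - 1) / δ) * (N (η₀ - δ) Ψ) ^ 2 := by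
          rw [mul_assoc]; exact mul_le_mul_of_nonneg_left hlow hpos.le
      _ ≤ b Ψ Ψ := hc
      _ ≤ _ := hbound
  -- conclude X ≤ 2 c₀ Y + c₀ ρ
  have hXbound : X ≤ 2 * c₀ * Y + c₀ * ρ :=
    nitsche_arith_aux δ η₀ ρ X Y hδ hη₀ hρ hX0 hY0 hmain
  -- triangle
  have huU : u - U = (u - Φ) + (-Ψ) := by rw [hΨdef]; abel
  have hNneg : N 1 (-Ψ) = X := by
    have hBneg : B (-Ψ) (-Ψ) = B Ψ Ψ := by
      simp only [map_neg, LinearMap.neg_apply, neg_neg]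
    rw [hX, hN1, hN1, hBneg]
  have htr : N 1 (u - U) ≤ Y + X := by
    rw [huU]
    calc N 1 ((u - Φ) + (-Ψ)) ≤ N 1 (u - Φ) + N 1 (-Ψ) := htri _ _
      _ = Y + X := by rw [hNneg]
  calc N 1 (u - U) ≤ Y + X := htr
    _ ≤ Y + (2 * c₀ * Y + c₀ * ρ) := by linarith
    _ = (2 * c₀ + 1) * Y + c₀ * ρ := by ring
end

section
/- For all real numbers δ and η₀ with 1 < δ < η₀, the constant c_{δ,η₀} := (δ/(δ−1))·((η₀+1)/min(η₀−δ, 1)) satisfies c_{δ,η₀} ≥ 2·(2+√3); moreover, equality holds for δ = 1+√3 and η₀ = 2+√3 (i.e. η₀ − δ = 1). Consequently, the minimum of c_{δ,η₀} over all δ > 1 and η₀ > δ equals 2·(2+√3). -/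
private lemma nitsche_lb : ∀ δ η₀ : ℝ, 1 < δ → δ < η₀ →
    2 * (2 + Real.sqrt 3) ≤ (δ / (δ - 1)) * ((η₀ + 1) / min (η₀ - δ) 1) := by
  intro δ η₀ hδ hη
  set s := Real.sqrt 3 with hs
  have hs3 : s * s = 3 := Real.mul_self_sqrt (by norm_num)
  have hs1 : 1 ≤ s := by nlinarith [Real.sqrt_nonneg 3]
  have hδ1 : 0 < δ - 1 := by linarith
  have hm : 0 < min (η₀ - δ) 1 := lt_min (by linarith) one_pos
  rw [div_mul_div_comm, le_div_iff₀ (by positivity)]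
  rcases le_total (η₀ - δ) 1 with h | h
  · rw [min_eq_left h]
    nlinarith [sq_nonneg (δ - 1 - s), mul_nonneg (mul_nonneg (sub_nonneg.2 h) hδ1.le) (by linarith : (0:ℝ) ≤ s), mul_nonneg (sub_nonneg.2 h) hδ1.le, mul_pos hδ1 hδ1, sq_nonneg (δ - 1)]
  · rw [min_eq_right h]
    nlinarith [sq_nonneg (δ - 1 - s), mul_pos hδ1 (by linarith : (0:ℝ) < η₀ - δ - 1 + 1), mul_nonneg hδ1.le (by linarith : (0:ℝ) ≤ η₀ - δ - 1)]

private lemma nitsche_eq :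
    ((1 + Real.sqrt 3) / ((1 + Real.sqrt 3) - 1)) *
        (((2 + Real.sqrt 3) + 1) / min ((2 + Real.sqrt 3) - (1 + Real.sqrt 3)) 1) =
      2 * (2 + Real.sqrt 3) := by
  have hs3 : Real.sqrt 3 * Real.sqrt 3 = 3 := Real.mul_self_sqrt (by norm_num)
  have hs0 : 0 < Real.sqrt 3 := Real.sqrt_pos.2 (by norm_num)
  have : (2 + Real.sqrt 3) - (1 + Real.sqrt 3) = 1 := by ring
  rw [this, min_self]
  field_simp
  nlinarith [hs3]

/-- The constant `c_{δ,η₀} = (δ/(δ−1))·((η₀+1)/min(η₀−δ,1))` of the quasi-optimality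
estimate satisfies `c_{δ,η₀} ≥ 2(2+√3)` for all `1 < δ < η₀`, with equality at
`δ = 1+√3`, `η₀ = 2+√3`; consequently `2(2+√3)` is the minimum of `c_{δ,η₀}`
over all `δ > 1`, `η₀ > δ`. -/
theorem nitsche_constant_minimum :
    (∀ δ η₀ : ℝ, 1 < δ → δ < η₀ →
        2 * (2 + Real.sqrt 3) ≤ (δ / (δ - 1)) * ((η₀ + 1) / min (η₀ - δ) 1)) ∧
      ((1 + Real.sqrt 3) / ((1 + Real.sqrt 3) - 1)) *
          (((2 + Real.sqrt 3) + 1) / min ((2 + Real.sqrt 3) - (1 + Real.sqrt 3)) 1) =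
        2 * (2 + Real.sqrt 3) ∧
      IsLeast {c : ℝ | ∃ δ η₀ : ℝ, 1 < δ ∧ δ < η₀ ∧
          c = (δ / (δ - 1)) * ((η₀ + 1) / min (η₀ - δ) 1)}
        (2 * (2 + Real.sqrt 3)) := by
  have hs1 : 1 < Real.sqrt 3 := by
    nlinarith [Real.mul_self_sqrt (show (0:ℝ) ≤ 3 by norm_num), Real.sqrt_nonneg 3]
  refine ⟨nitsche_lb, nitsche_eq, ⟨⟨1 + Real.sqrt 3, 2 + Real.sqrt 3, by linarith, by linarith, nitsche_eq.symm⟩, ?_⟩⟩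
  rintro c ⟨δ, η₀, h1, h2, rfl⟩
  exact nitsche_lb δ η₀ h1 h2
end

section
/- For all real numbers p and s with 1 ≤ s ≤ p + 1, define Φ₁(s,p) := (2p+1)^{−1/2}·[ (Γ(p+2−s)/Γ(p+s))^{1/2} + (Γ(p+3−s)/Γ(p+1+s))^{1/2} ] + ( (Γ(p+2−s)/Γ(p+2+s)) · (Γ(p+3−s)/Γ(p+1+s)) )^{1/4} + (Γ(p+2−s)/Γ(p+2+s))^{1/2}, where Γ is the Gamma function. Then Φ₁(s,p)² ≤ 16 · Γ(p+2−s)/Γ(p+s+1). -/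
/-!
Put `X = Γ(p+2−s)/Γ(p+s+1)`. The functional equation `Γ(x+1) = x Γ(x)` turns the Gamma ratios
in `Φ₁` into `(p+s)X`, `(p+2−s)X` and `X/(p+s+1)`. Since `p+s` and `p+2−s` lie in `[1, 2p+1]`
and `p+2−s ≤ p+s+1`, the three summands of `Φ₁` are at most `2√X`, `√X` and `√X`, so
`Φ₁ ≤ 4√X`.
-/

open Real

lemma Real.Gamma_div_Gamma_add_one (x : ℝ) {y : ℝ} (hy : y ≠ 0) :
    Gamma x / Gamma (y + 1) = Gamma x / Gamma y / y := by
  rw [Gamma_add_one hy, mul_comm, div_div]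

lemma Real.Gamma_div_Gamma_eq_mul (x : ℝ) {y : ℝ} (hy : y ≠ 0) :
    Gamma x / Gamma y = y * (Gamma x / Gamma (y + 1)) := by
  rw [Gamma_div_Gamma_add_one x hy, mul_div_cancel₀ _ hy]

lemma Real.Gamma_add_one_div_Gamma {x : ℝ} (hx : x ≠ 0) (y : ℝ) :
    Gamma (x + 1) / Gamma y = x * (Gamma x / Gamma y) := by
  rw [Gamma_add_one hx, mul_div_assoc]

lemma rpow_neg_half_mul_sqrt_mul_le {a c X : ℝ} (hc : 0 < c) (hac : a ≤ c) (hX : 0 ≤ X) :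
    c ^ (-(1 / 2) : ℝ) * √(a * X) ≤ √X := by
  have hsqrt_c : 0 < √c := sqrt_pos.mpr hc
  rw [rpow_neg hc.le, ← sqrt_eq_rpow, inv_mul_le_iff₀ hsqrt_c, ← sqrt_mul hc.le]
  exact sqrt_le_sqrt (mul_le_mul_of_nonneg_right hac hX)

lemma rpow_quarter_le_sqrt_of_le_sq {Z X : ℝ} (hZ : 0 ≤ Z) (hZX : Z ≤ X ^ 2) (hX : 0 ≤ X) :
    Z ^ (1 / 4 : ℝ) ≤ √X := by
  calc Z ^ (1 / 4 : ℝ) ≤ (X ^ 2) ^ (1 / 4 : ℝ) := rpow_le_rpow hZ hZX (by norm_num)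
    _ = √X := by
      rw [sqrt_eq_rpow, ← rpow_natCast X 2, ← rpow_mul hX]
      norm_num

lemma trace_constant_sq_le {a b c X : ℝ} (hX : 0 ≤ X) (hc : 0 < c) (hac : a ≤ c)
    (hbc : b ≤ c) (ha : 0 ≤ a) (hb : 0 ≤ b) (hba : b ≤ a + 1) :
    (c ^ (-(1 / 2) : ℝ) * (√(a * X) + √(b * X)) + (X / (a + 1) * (b * X)) ^ (1 / 4 : ℝ) +
      √(X / (a + 1))) ^ 2 ≤ 16 * X := by
  have hprod : 0 ≤ X / (a + 1) * (b * X) := by positivity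
  have h₁ := rpow_neg_half_mul_sqrt_mul_le hc hac hX
  have h₂ := rpow_neg_half_mul_sqrt_mul_le hc hbc hX
  have h₃ : (X / (a + 1) * (b * X)) ^ (1 / 4 : ℝ) ≤ √X := by
    have hquot : X / (a + 1) * (b * X) = X ^ 2 * (b / (a + 1)) := by
      field_simp
    refine rpow_quarter_le_sqrt_of_le_sq hprod ?_ hX
    rw [hquot]
    exact mul_le_of_le_one_right (sq_nonneg X) ((div_le_one (by linarith)).mpr hba)
  have h₄ : √(X / (a + 1)) ≤ √X := sqrt_le_sqrt (div_le_self hX (by linarith))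
  have hsum_nonneg : 0 ≤ c ^ (-(1 / 2) : ℝ) * (√(a * X) + √(b * X)) +
      (X / (a + 1) * (b * X)) ^ (1 / 4 : ℝ) + √(X / (a + 1)) := by
    have := rpow_nonneg hc.le (-(1 / 2) : ℝ)
    have := rpow_nonneg hprod (1 / 4 : ℝ)
    positivity
  calc _ ≤ (4 * √X) ^ 2 := by
        refine pow_le_pow_left₀ hsum_nonneg ?_ 2
        linarith [mul_add (c ^ (-(1 / 2) : ℝ)) (√(a * X)) (√(b * X))]
    _ = 16 * X := by
      rw [mul_pow, sq_sqrt hX]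
      norm_num

/-- Simplification of the hp-projection trace constant: for `1 ≤ s ≤ p+1`,
`Φ₁(s,p)² ≤ 16·Γ(p+2−s)/Γ(p+s+1)`, where
`Φ₁(s,p) = (2p+1)^{−1/2}[(Γ(p+2−s)/Γ(p+s))^{1/2} + (Γ(p+3−s)/Γ(p+1+s))^{1/2}]
 + ((Γ(p+2−s)/Γ(p+2+s))·(Γ(p+3−s)/Γ(p+1+s)))^{1/4} + (Γ(p+2−s)/Γ(p+2+s))^{1/2}`. -/
theorem hp_trace_constant_bound (p s : ℝ) (h1 : 1 ≤ s) (h2 : s ≤ p + 1) :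
    ((2 * p + 1) ^ (-(1 / 2) : ℝ) *
          (Real.sqrt (Real.Gamma (p + 2 - s) / Real.Gamma (p + s)) +
            Real.sqrt (Real.Gamma (p + 3 - s) / Real.Gamma (p + 1 + s))) +
        ((Real.Gamma (p + 2 - s) / Real.Gamma (p + 2 + s)) *
            (Real.Gamma (p + 3 - s) / Real.Gamma (p + 1 + s))) ^ ((1 : ℝ) / 4) +
        Real.sqrt (Real.Gamma (p + 2 - s) / Real.Gamma (p + 2 + s))) ^ 2 ≤
      16 * (Real.Gamma (p + 2 - s) / Real.Gamma (p + s + 1)) := by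
  have hX : 0 ≤ Gamma (p + 2 - s) / Gamma (p + s + 1) :=
    div_nonneg (Gamma_pos_of_pos (by linarith)).le (Gamma_pos_of_pos (by linarith)).le
  rw [show p + 3 - s = p + 2 - s + 1 by ring, show p + 2 + s = p + s + 1 + 1 by ring,
    add_right_comm p 1 s, Gamma_add_one_div_Gamma (by linarith),
    Gamma_div_Gamma_eq_mul _ (by linarith : p + s ≠ 0),
    Gamma_div_Gamma_add_one _ (by linarith : p + s + 1 ≠ 0)]
  exact trace_constant_sq_le hX (by linarith) (by linarith) (by linarith) (by linarith)
    (by linarith) (by linarith)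
end

section
/- Let d > 0 and α ∈ (0,1) be real numbers and define F(d,α) := (αd/2)^{2α} · (1−α)^{1−α} / (1+α)^{1+α}. Then there exists a constant C > 0 such that for every real number p ≥ 1, setting s := α·p, one has (d/2)^{2s} · (Γ(p−s+1)/Γ(p+s+1)) · Γ(s+1)² ≤ C · p · (F(d,α))^{p}, where Γ is the Gamma function. -/
set_option maxHeartbeats 1000000

open Real Nat

-- factorial Stirling bounds
lemma hp_fact_bounds : ∃ a : ℝ, 0 < a ∧ ∀ n : ℕ, 1 ≤ n →
    a * (Real.sqrt n * Real.exp (n * Real.log n - n)) ≤ n ! ∧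
    (n ! : ℝ) ≤ Real.exp 1 * (Real.sqrt n * Real.exp (n * Real.log n - n)) := by
  obtain ⟨a, ha, hab⟩ := Stirling.stirlingSeq'_bounded_by_pos_constant
  refine ⟨a, ha, fun n hn => ?_⟩
  obtain ⟨m, rfl⟩ : ∃ m, n = m + 1 := ⟨n - 1, (Nat.succ_pred_eq_of_pos hn).symm⟩
  set n := m + 1
  have hn0 : (0:ℝ) < n := by positivity
  have hpow : ((n:ℝ) / Real.exp 1) ^ n = Real.exp (n * Real.log n - n) := by
    have h1 : ((n:ℝ) / Real.exp 1) = Real.exp (Real.log n - 1) := by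
      rw [Real.exp_sub, Real.exp_log hn0]

    rw [h1, ← Real.exp_nat_mul]
    congr 1
    ring
  have hdef : (n ! : ℝ) = Stirling.stirlingSeq n * (Real.sqrt (2*n) * ((n:ℝ)/Real.exp 1)^n) := by
    rw [Stirling.stirlingSeq]
    field_simp
  have hs1 : a ≤ Stirling.stirlingSeq n := hab m
  have hs2 : Stirling.stirlingSeq n ≤ Real.exp 1 / Real.sqrt 2 := by
    have := Stirling.stirlingSeq'_antitone (Nat.zero_le m)
    simpa using this
  have hsq : Real.sqrt (2*(n:ℝ)) = Real.sqrt 2 * Real.sqrt n := Real.sqrt_mul (by norm_num) _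
  have h2 : (1:ℝ) ≤ Real.sqrt 2 := by
    nlinarith [Real.sq_sqrt (by norm_num : (2:ℝ) ≥ 0) , Real.sqrt_nonneg (2:ℝ)]
  have hsqn : (0:ℝ) < Real.sqrt n := Real.sqrt_pos.mpr hn0
  have hexp : (0:ℝ) < Real.exp ((n:ℝ) * Real.log n - n) := Real.exp_pos _
  have hs2' : (0:ℝ) < Real.sqrt 2 := by linarith
  have hse : (0:ℝ) < Real.sqrt n * Real.exp ((n:ℝ) * Real.log n - n) := mul_pos hsqn hexp
  constructor
  · rw [hdef, hpow, hsq]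
    have key : a ≤ Stirling.stirlingSeq n * Real.sqrt 2 := by nlinarith
    nlinarith [mul_le_mul_of_nonneg_right key (le_of_lt hse)]
  · rw [hdef, hpow, hsq]
    have key : Stirling.stirlingSeq n * Real.sqrt 2 ≤ Real.exp 1 := (le_div_iff₀ hs2').mp hs2
    nlinarith [mul_le_mul_of_nonneg_right key (le_of_lt hse)]

lemma hp_gamma_interp (n : ℕ) (hn : 1 ≤ n) (x : ℝ) (hx1 : (n:ℝ) ≤ x) (hx2 : x ≤ n + 1) :
    (n ! : ℝ) * Real.exp ((x - n) * Real.log n) ≤ Real.Gamma (x + 1) ∧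
    Real.Gamma (x + 1) ≤ n ! * Real.exp ((x - n) * Real.log (n + 1)) := by
  set t : ℝ := x - n with ht
  have ht0 : 0 ≤ t := by simp [ht]; linarith
  have ht1 : t ≤ 1 := by simp [ht]; linarith
  have hn0 : (0:ℝ) < n := by exact_mod_cast hn
  have hx0 : (0:ℝ) < x + 1 := by linarith
  have hΓx : 0 < Real.Gamma (x + 1) := Real.Gamma_pos_of_pos hx0
  have hfn : (0:ℝ) < (n ! : ℝ) := by exact_mod_cast Nat.factorial_pos n
  have hΓn1 : Real.Gamma ((n:ℝ) + 1) = (n ! : ℝ) := Real.Gamma_nat_eq_factorial n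
  have hΓn2 : Real.Gamma ((n:ℝ) + 2) = ((n+1)! : ℝ) := by
    have := Real.Gamma_nat_eq_factorial (n+1)
    push_cast at this ⊢
    convert this using 2 <;> ring
  have hΓn : Real.Gamma (n:ℝ) = (n ! : ℝ) / n := by
    have h := Real.Gamma_add_one (s := (n:ℝ)) (ne_of_gt hn0)
    rw [hΓn1] at h
    field_simp [h.symm]
    linarith [h]
  have hconv := Real.convexOn_log_Gamma.2
  constructor
  · -- lower bound via convexity at points n and x+1, target n+1
    have hmem1 : (n:ℝ) ∈ Set.Ioi (0:ℝ) := hn0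
    have hmem2 : x + 1 ∈ Set.Ioi (0:ℝ) := hx0
    have ha : (0:ℝ) ≤ t / (1 + t) := by positivity
    have hb : (0:ℝ) ≤ 1 / (1 + t) := by positivity
    have hab : t / (1 + t) + 1 / (1 + t) = 1 := by field_simp; ring
    have h := hconv hmem1 hmem2 ha hb hab
    have harg : (t / (1+t)) • (n:ℝ) + (1 / (1+t)) • (x + 1) = (n:ℝ) + 1 := by
      simp only [smul_eq_mul]
      field_simp
      ring
    rw [harg] at h
    simp only [Function.comp_apply, smul_eq_mul] at h
    rw [hΓn1, hΓn] at h
    -- h : log n! ≤ t/(1+t) * log (n!/n) + 1/(1+t) * log Γ(x+1)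
    have hlogd : Real.log ((n ! : ℝ) / n) = Real.log (n !) - Real.log n :=
      Real.log_div (ne_of_gt hfn) (ne_of_gt hn0)
    rw [hlogd] at h
    have h1t : (0:ℝ) < 1 + t := by linarith
    have key : Real.log (n !) + t * Real.log n ≤ Real.log (Real.Gamma (x+1)) := by
      have h' := mul_le_mul_of_nonneg_left h (le_of_lt h1t)
      rw [mul_add] at h'
      have e1 : (1+t) * (t / (1+t) * (Real.log (n !) - Real.log n)) = t * (Real.log (n !) - Real.log n) := by
        field_simp
      have e2 : (1+t) * (1 / (1+t) * Real.log (Real.Gamma (x+1))) = Real.log (Real.Gamma (x+1)) := by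
        field_simp
      rw [e1, e2] at h'
      nlinarith [h']
    calc (n ! : ℝ) * Real.exp (t * Real.log n)
        = Real.exp (Real.log (n !) + t * Real.log n) := by
          rw [Real.exp_add, Real.exp_log hfn]
      _ ≤ Real.exp (Real.log (Real.Gamma (x+1))) := Real.exp_le_exp.mpr key
      _ = Real.Gamma (x+1) := Real.exp_log hΓx
  · -- upper bound via convexity at points n+1, n+2
    have hmem1 : (n:ℝ) + 1 ∈ Set.Ioi (0:ℝ) := by simp; linarith
    have hmem2 : (n:ℝ) + 2 ∈ Set.Ioi (0:ℝ) := by simp; linarith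
    have h := hconv hmem1 hmem2 (by linarith : (0:ℝ) ≤ 1 - t) ht0 (by ring)
    have harg : (1 - t) • ((n:ℝ) + 1) + t • ((n:ℝ) + 2) = x + 1 := by
      simp only [smul_eq_mul]; ring
    rw [harg] at h
    simp only [Function.comp_apply, smul_eq_mul] at h
    rw [hΓn1, hΓn2] at h
    have hfs : ((n+1)! : ℝ) = ((n:ℝ)+1) * (n ! : ℝ) := by
      push_cast [Nat.factorial_succ]; ring
    have hlogd : Real.log (((n+1)! : ℝ)) = Real.log ((n:ℝ)+1) + Real.log (n !) := by
      rw [hfs, Real.log_mul (by positivity) (ne_of_gt hfn)]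
    rw [hlogd] at h
    have key : Real.log (Real.Gamma (x+1)) ≤ Real.log (n !) + t * Real.log ((n:ℝ)+1) := by
      nlinarith [h]
    calc Real.Gamma (x+1) = Real.exp (Real.log (Real.Gamma (x+1))) := (Real.exp_log hΓx).symm
      _ ≤ Real.exp (Real.log (n !) + t * Real.log ((n:ℝ)+1)) := Real.exp_le_exp.mpr key
      _ = (n ! : ℝ) * Real.exp (t * Real.log ((n:ℝ)+1)) := by
          rw [Real.exp_add, Real.exp_log hfn]

lemma hp_gamma_bounds (x0 : ℝ) (h0 : 0 < x0) (h01 : x0 ≤ 1) :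
    ∃ A B : ℝ, 0 < A ∧ 0 < B ∧ ∀ x : ℝ, x0 ≤ x →
      B * (Real.sqrt x * Real.exp (x * Real.log x - x)) ≤ Real.Gamma (x + 1) ∧
      Real.Gamma (x + 1) ≤ A * (Real.sqrt x * Real.exp (x * Real.log x - x)) := by
  obtain ⟨a, ha, hfact⟩ := hp_fact_bounds
  refine ⟨Real.exp 1 / Real.sqrt x0 + 2 * Real.exp 1 * Real.exp 1,
    min (1/2) (a / (2 * Real.exp 1)), by positivity, by positivity, fun x hx => ?_⟩
  have hx0 : (0:ℝ) < x := lt_of_lt_of_le h0 hx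
  have hΓx : 0 < Real.Gamma (x + 1) := Real.Gamma_pos_of_pos (by linarith)
  have hsx : (0:ℝ) < Real.sqrt x := Real.sqrt_pos.mpr hx0
  rcases le_or_gt x 1 with hle | hgt
  · -- small case : x0 ≤ x ≤ 1
    have hΓle : Real.Gamma (x + 1) ≤ 1 := by
      have hconv := Real.convexOn_log_Gamma.2 (by norm_num : (1:ℝ) ∈ Set.Ioi (0:ℝ))
        (by norm_num : (2:ℝ) ∈ Set.Ioi (0:ℝ)) (by linarith : (0:ℝ) ≤ 1 - x) (le_of_lt hx0)
        (by ring)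
      have harg : (1 - x) • (1:ℝ) + x • (2:ℝ) = x + 1 := by simp [smul_eq_mul]; ring
      rw [harg] at hconv
      simp only [Function.comp_apply, smul_eq_mul, Real.Gamma_one, Real.Gamma_two,
        Real.log_one, mul_zero, add_zero] at hconv
      calc Real.Gamma (x+1) = Real.exp (Real.log (Real.Gamma (x+1))) := (Real.exp_log hΓx).symm
        _ ≤ Real.exp 0 := Real.exp_le_exp.mpr hconv
        _ = 1 := Real.exp_zero
    have hΓge : (1:ℝ)/2 ≤ Real.Gamma (x + 1) := by
      have h3 : Real.Gamma (3:ℝ) = 2 := by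
        have := Real.Gamma_nat_eq_factorial 2
        norm_num at this
        convert this using 2 <;> norm_num
      have hconv := Real.convexOn_log_Gamma.2 (by simp; linarith : x + 1 ∈ Set.Ioi (0:ℝ))
        (by norm_num : (3:ℝ) ∈ Set.Ioi (0:ℝ))
        (div_nonneg (by norm_num) (by linarith) : (0:ℝ) ≤ 1 / (2 - x))
        (div_nonneg (by linarith) (by linarith) : (0:ℝ) ≤ (1 - x) / (2 - x))
        (by
          have h2x : (2:ℝ) - x ≠ 0 := by intro h; rw [sub_eq_zero] at h; linarith
          field_simp
          ring)
      have h2x : (0:ℝ) < 2 - x := by linarith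
      have harg : (1/(2-x)) • (x+1) + ((1-x)/(2-x)) • (3:ℝ) = 2 := by
        simp only [smul_eq_mul]
        field_simp
        ring
      rw [harg] at hconv
      simp only [Function.comp_apply, smul_eq_mul, Real.Gamma_two, Real.log_one, h3] at hconv
      have hlog2 : (0:ℝ) ≤ Real.log 2 := Real.log_nonneg (by norm_num)
      have key : -Real.log 2 ≤ Real.log (Real.Gamma (x+1)) := by
        have h' := mul_le_mul_of_nonneg_left hconv h2x.le
        have e1 : (2-x) * (1/(2-x) * Real.log (Real.Gamma (x+1)) + (1-x)/(2-x) * Real.log 2)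
            = Real.log (Real.Gamma (x+1)) + (1-x) * Real.log 2 := by field_simp; try ring
        rw [mul_zero, e1] at h'
        nlinarith [mul_nonneg hx0.le hlog2]
      calc (1:ℝ)/2 = Real.exp (-Real.log 2) := by
            rw [Real.exp_neg, Real.exp_log (by norm_num : (0:ℝ) < 2)]
            norm_num
        _ ≤ Real.exp (Real.log (Real.Gamma (x+1))) := Real.exp_le_exp.mpr key
        _ = Real.Gamma (x+1) := Real.exp_log hΓx
    constructor
    · have h1 : Real.sqrt x * Real.exp (x * Real.log x - x) ≤ 1 := by
        have hs : Real.sqrt x ≤ 1 := by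
          rw [show (1:ℝ) = Real.sqrt 1 by simp]
          exact Real.sqrt_le_sqrt hle
        have he : Real.exp (x * Real.log x - x) ≤ 1 := by
          rw [show (1:ℝ) = Real.exp 0 by simp]
          apply Real.exp_le_exp.mpr
          have : Real.log x ≤ 0 := Real.log_nonpos (le_of_lt hx0) hle
          nlinarith
        nlinarith [Real.sqrt_nonneg x, Real.exp_pos (x * Real.log x - x)]
      calc min (1/2) (a / (2 * Real.exp 1)) * (Real.sqrt x * Real.exp (x * Real.log x - x))
          ≤ (1/2) * 1 := by
            apply mul_le_mul (min_le_left _ _) h1 (by positivity) (by norm_num)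
        _ ≤ Real.Gamma (x + 1) := by rw [mul_one]; exact hΓge
    · have h2 : Real.sqrt x0 * Real.exp (-1) ≤ Real.sqrt x * Real.exp (x * Real.log x - x) := by
        have hs : Real.sqrt x0 ≤ Real.sqrt x := Real.sqrt_le_sqrt hx
        have he : Real.exp (-1:ℝ) ≤ Real.exp (x * Real.log x - x) := by
          apply Real.exp_le_exp.mpr
          have hl := Real.log_le_sub_one_of_pos (show (0:ℝ) < 1/x by positivity)
          rw [Real.log_div one_ne_zero (ne_of_gt hx0), Real.log_one] at hl
          -- hl : -log x ≤ 1/x - 1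
          have := mul_le_mul_of_nonneg_left hl (le_of_lt hx0)
          have hinv : x * (1/x) = 1 := by field_simp
          nlinarith [this, hinv]
        exact mul_le_mul hs he (by positivity) (Real.sqrt_nonneg x)
      calc Real.Gamma (x + 1) ≤ 1 := hΓle
        _ ≤ (Real.exp 1 / Real.sqrt x0) * (Real.sqrt x0 * Real.exp (-1)) := by
            rw [show Real.exp 1 / Real.sqrt x0 * (Real.sqrt x0 * Real.exp (-1))
              = (Real.exp 1 * Real.exp (-1)) * (Real.sqrt x0 / Real.sqrt x0) by ring,
              ← Real.exp_add]
            simp [div_self (ne_of_gt (Real.sqrt_pos.mpr h0))]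
        _ ≤ (Real.exp 1 / Real.sqrt x0) * (Real.sqrt x * Real.exp (x * Real.log x - x)) := by
            apply mul_le_mul_of_nonneg_left h2 (by positivity)
        _ ≤ (Real.exp 1 / Real.sqrt x0 + 2 * Real.exp 1 * Real.exp 1) *
              (Real.sqrt x * Real.exp (x * Real.log x - x)) := by
            apply mul_le_mul_of_nonneg_right _ (by positivity)
            nlinarith [Real.exp_pos (1:ℝ)]
  · -- large case : x > 1
    obtain ⟨n, hndef⟩ : ∃ n : ℕ, n = ⌊x⌋₊ := ⟨_, rfl⟩
    have hn1 : 1 ≤ n := by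
      rw [hndef]
      exact Nat.le_floor (by exact_mod_cast hgt.le)
    have hnx : (n:ℝ) ≤ x := by rw [hndef]; exact Nat.floor_le hx0.le
    have hxn : x < (n:ℝ) + 1 := by rw [hndef]; exact Nat.lt_floor_add_one x
    have hn0 : (0:ℝ) < n := by exact_mod_cast hn1
    have hn0' : (1:ℝ) ≤ n := by exact_mod_cast hn1
    obtain ⟨hfl, hfu⟩ := hfact n hn1
    obtain ⟨hgl, hgu⟩ := hp_gamma_interp n hn1 x hnx hxn.le
    obtain ⟨t, htdef⟩ : ∃ t : ℝ, t = x - n := ⟨_, rfl⟩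
    rw [← htdef] at hgl hgu
    have htx : x = (n:ℝ) + t := by rw [htdef]; ring
    have ht0 : 0 ≤ t := by rw [htdef]; linarith
    have ht1 : t ≤ 1 := by rw [htdef]; linarith
    have hlogn : 0 ≤ Real.log n := Real.log_nonneg hn0'
    have hlog2 : (0:ℝ) ≤ Real.log 2 := Real.log_nonneg (by norm_num)
    have hsn : (0:ℝ) < Real.sqrt n := Real.sqrt_pos.mpr hn0
    have hsnx : Real.sqrt n ≤ Real.sqrt x := Real.sqrt_le_sqrt hnx
    have hlognx : Real.log n ≤ Real.log x := Real.log_le_log hn0 hnx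
    constructor
    · -- lower bound
      have hE : x * Real.log x - x ≤ (n:ℝ) * Real.log n - n + t * Real.log n + 1 := by
        have hlx : Real.log x ≤ Real.log n + t / n := by
          have hxe : x = (n:ℝ) * (1 + t/n) := by rw [htx]; field_simp
          rw [hxe, Real.log_mul (ne_of_gt hn0) (by positivity)]
          have := Real.log_le_sub_one_of_pos (show (0:ℝ) < 1 + t/n by positivity)
          linarith
        have hk : x * Real.log x ≤ x * (Real.log n + t / n) :=
          mul_le_mul_of_nonneg_left hlx hx0.le
        have hexp : x * (Real.log n + t/n) = (n:ℝ) * Real.log n + t * Real.log n + t + t*t/n := by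
          rw [htx]; field_simp; ring
        have htn : t*t/n ≤ 1 := by
          rw [div_le_one hn0]; nlinarith
        linarith [hk, hexp, htn, htx.le]
      have hsx2 : Real.sqrt x ≤ 2 * Real.sqrt n := by
        rw [show (2:ℝ) * Real.sqrt n = Real.sqrt (4*n) by
          rw [show (4:ℝ)*n = 2^2*n by ring, Real.sqrt_mul (by positivity), Real.sqrt_sq (by norm_num)]]
        exact Real.sqrt_le_sqrt (by nlinarith)
      have hB : min (1/2) (a / (2 * Real.exp 1)) ≤ a / (2 * Real.exp 1) := min_le_right _ _
      have step1 : min (1/2) (a / (2 * Real.exp 1)) * (Real.sqrt x * Real.exp (x * Real.log x - x))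
          ≤ (a / (2 * Real.exp 1)) * ((2 * Real.sqrt n) * (Real.exp ((n:ℝ) * Real.log n - n + t * Real.log n) * Real.exp 1)) := by
        apply mul_le_mul hB _ (by positivity) (by positivity)
        rw [← Real.exp_add]
        exact mul_le_mul hsx2 (Real.exp_le_exp.mpr (by linarith)) (by positivity) (by positivity)
      have step2 : (a / (2 * Real.exp 1)) * ((2 * Real.sqrt n) * (Real.exp ((n:ℝ) * Real.log n - n + t * Real.log n) * Real.exp 1))
          = a * (Real.sqrt n * Real.exp ((n:ℝ) * Real.log n - n)) * Real.exp (t * Real.log n) := by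
        rw [Real.exp_add]
        field_simp
      have step3 : a * (Real.sqrt n * Real.exp ((n:ℝ) * Real.log n - n)) * Real.exp (t * Real.log n)
          ≤ (n ! : ℝ) * Real.exp (t * Real.log n) :=
        mul_le_mul_of_nonneg_right hfl (by positivity)
      calc min (1/2) (a / (2 * Real.exp 1)) * (Real.sqrt x * Real.exp (x * Real.log x - x))
          ≤ a * (Real.sqrt n * Real.exp ((n:ℝ) * Real.log n - n)) * Real.exp (t * Real.log n) := by
            rw [← step2]; exact step1
        _ ≤ (n ! : ℝ) * Real.exp (t * Real.log n) := step3
        _ ≤ Real.Gamma (x + 1) := hgl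
    · -- upper bound
      have hE : (n:ℝ) * Real.log n - n + t * Real.log ((n:ℝ)+1)
          ≤ x * Real.log x - x + 1 + Real.log 2 := by
        have hl1 : Real.log ((n:ℝ)+1) ≤ Real.log n + Real.log 2 := by
          rw [← Real.log_mul (ne_of_gt hn0) (by norm_num)]
          exact Real.log_le_log (by linarith) (by nlinarith)
        have hk : x * Real.log n ≤ x * Real.log x := mul_le_mul_of_nonneg_left hlognx hx0.le
        have hxeq : x * Real.log n = (n:ℝ) * Real.log n + t * Real.log n := by
          rw [htdef]; ring
        have hta : t * Real.log ((n:ℝ)+1) ≤ t * (Real.log n + Real.log 2) :=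
          mul_le_mul_of_nonneg_left hl1 ht0
        nlinarith [mul_le_mul_of_nonneg_right ht1 hlog2]
      calc Real.Gamma (x + 1) ≤ (n ! : ℝ) * Real.exp (t * Real.log ((n:ℝ)+1)) := hgu
        _ ≤ (Real.exp 1 * (Real.sqrt n * Real.exp ((n:ℝ) * Real.log n - n))) * Real.exp (t * Real.log ((n:ℝ)+1)) :=
            mul_le_mul_of_nonneg_right hfu (by positivity)
        _ = Real.exp 1 * Real.sqrt n * Real.exp ((n:ℝ) * Real.log n - n + t * Real.log ((n:ℝ)+1)) := by
            rw [Real.exp_add]; ring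
        _ ≤ Real.exp 1 * Real.sqrt x * Real.exp (x * Real.log x - x + 1 + Real.log 2) := by
            apply mul_le_mul (mul_le_mul_of_nonneg_left hsnx (by positivity))
              (Real.exp_le_exp.mpr hE) (by positivity) (by positivity)
        _ = (2 * Real.exp 1 * Real.exp 1) * (Real.sqrt x * Real.exp (x * Real.log x - x)) := by
            rw [show x * Real.log x - x + 1 + Real.log 2 = (x * Real.log x - x) + (1 + Real.log 2) by ring,
              Real.exp_add, Real.exp_add, Real.exp_log (by norm_num : (0:ℝ) < 2)]
            ring
        _ ≤ (Real.exp 1 / Real.sqrt x0 + 2 * Real.exp 1 * Real.exp 1) *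
              (Real.sqrt x * Real.exp (x * Real.log x - x)) := by
            apply mul_le_mul_of_nonneg_right _ (by positivity)
            have : 0 < Real.exp 1 / Real.sqrt x0 := by positivity
            linarith

/-- Stirling-type bound governing the layerwise hp-approximation errors: for `d > 0`,
`α ∈ (0,1)` and `s = αp`, there is `C > 0` such that for all `p ≥ 1`
`(d/2)^{2s}·(Γ(p−s+1)/Γ(p+s+1))·Γ(s+1)² ≤ C·p·F(d,α)^p`, where
`F(d,α) = (αd/2)^{2α}·(1−α)^{1−α}/(1+α)^{1+α}`. -/
theorem hp_stirling_layer_bound (d α : ℝ) (hd : 0 < d) (hα : α ∈ Set.Ioo (0 : ℝ) 1) :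
    ∃ C : ℝ, 0 < C ∧ ∀ p : ℝ, 1 ≤ p →
      (d / 2) ^ (2 * (α * p)) *
          (Real.Gamma (p - α * p + 1) / Real.Gamma (p + α * p + 1)) *
          (Real.Gamma (α * p + 1)) ^ 2 ≤
        C * p * ((α * d / 2) ^ (2 * α) * (1 - α) ^ (1 - α) / (1 + α) ^ (1 + α)) ^ p := by
  obtain ⟨hα0, hα1⟩ := hα
  have h1α : (0:ℝ) < 1 - α := by linarith
  have h1α' : (0:ℝ) < 1 + α := by linarith
  have hd2 : (0:ℝ) < d / 2 := by linarith
  set x0 : ℝ := min α (1 - α) with hx0def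
  have hx0 : 0 < x0 := lt_min hα0 h1α
  have hx01 : x0 ≤ 1 := le_trans (min_le_left _ _) hα1.le
  obtain ⟨A, B, hA, hB, hAB⟩ := hp_gamma_bounds x0 hx0 hx01
  set F : ℝ := (α * d / 2) ^ (2 * α) * (1 - α) ^ (1 - α) / (1 + α) ^ (1 + α) with hFdef
  have hαd2 : (0:ℝ) < α * d / 2 := by positivity
  have hFpos : 0 < F := by
    rw [hFdef]; positivity
  have hlogF : Real.log F = 2 * α * (Real.log α + Real.log (d/2))
      + (1 - α) * Real.log (1 - α) - (1 + α) * Real.log (1 + α) := by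
    rw [hFdef, Real.log_div (by positivity) (by positivity),
      Real.log_mul (by positivity) (by positivity),
      Real.log_rpow hαd2, Real.log_rpow h1α, Real.log_rpow h1α',
      show α * d / 2 = α * (d/2) by ring, Real.log_mul (ne_of_gt hα0) (ne_of_gt hd2)]
  refine ⟨A^3 / B, by positivity, fun p hp => ?_⟩
  have hp0 : (0:ℝ) < p := by linarith
  set u : ℝ := (1 - α) * p with hudef
  set v : ℝ := α * p with hvdef
  set w : ℝ := (1 + α) * p with hwdef
  have hu0 : 0 < u := by positivity
  have hv0 : 0 < v := by positivity
  have hw0 : 0 < w := by positivity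
  have huw : u ≤ w := by rw [hudef, hwdef]; nlinarith
  have hux : x0 ≤ u := le_trans (min_le_right _ _) (by rw [hudef]; nlinarith)
  have hvx : x0 ≤ v := le_trans (min_le_left _ _) (by rw [hvdef]; nlinarith)
  have hwx : x0 ≤ w := le_trans hx01 (by rw [hwdef]; nlinarith)
  obtain ⟨_, hu_up⟩ := hAB u hux
  obtain ⟨_, hv_up⟩ := hAB v hvx
  obtain ⟨hw_low, _⟩ := hAB w hwx
  have hSw : 0 < Real.sqrt w * Real.exp (w * Real.log w - w) := by positivity
  have hSu : 0 ≤ Real.sqrt u * Real.exp (u * Real.log u - u) := by positivity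
  have hSv : 0 ≤ Real.sqrt v * Real.exp (v * Real.log v - v) := by positivity
  have e1 : p - α * p = u := by rw [hudef]; ring
  have e2 : p + α * p = w := by rw [hwdef]; ring
  rw [e1, e2]
  have hX : (0:ℝ) ≤ (d/2) ^ (2 * (α * p)) := le_of_lt (Real.rpow_pos_of_pos hd2 _)
  have stepA : Real.Gamma (u + 1) / Real.Gamma (w + 1)
      ≤ (A * (Real.sqrt u * Real.exp (u * Real.log u - u)))
        / (B * (Real.sqrt w * Real.exp (w * Real.log w - w))) :=
    div_le_div₀ (by positivity) hu_up (by positivity) hw_low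
  have stepB : (Real.Gamma (v + 1)) ^ 2 ≤ (A * (Real.sqrt v * Real.exp (v * Real.log v - v))) ^ 2 :=
    pow_le_pow_left₀ (Real.Gamma_pos_of_pos (by linarith : (0:ℝ) < v + 1)).le hv_up 2
  have hΓv : 0 ≤ Real.Gamma (v + 1) := (Real.Gamma_pos_of_pos (by linarith : (0:ℝ) < v + 1)).le
  have main : (d/2) ^ (2 * (α * p)) * (Real.Gamma (u + 1) / Real.Gamma (w + 1)) * (Real.Gamma (v + 1)) ^ 2
      ≤ (d/2) ^ (2 * (α * p))
        * ((A * (Real.sqrt u * Real.exp (u * Real.log u - u)))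
          / (B * (Real.sqrt w * Real.exp (w * Real.log w - w))))
        * (A * (Real.sqrt v * Real.exp (v * Real.log v - v))) ^ 2 := by
    apply mul_le_mul (mul_le_mul_of_nonneg_left stepA hX) stepB (sq_nonneg _)
    positivity
  refine le_trans main ?_
  -- now pure computation
  have hexpand : (d/2) ^ (2 * (α * p))
        * ((A * (Real.sqrt u * Real.exp (u * Real.log u - u)))
          / (B * (Real.sqrt w * Real.exp (w * Real.log w - w))))
        * (A * (Real.sqrt v * Real.exp (v * Real.log v - v))) ^ 2
      = (A^3 / B) * ((Real.sqrt u / Real.sqrt w) * v) * Real.exp (Real.log F * p) := by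
    have hXe : (d/2) ^ (2 * (α * p)) = Real.exp (Real.log (d/2) * (2 * (α * p))) :=
      Real.rpow_def_of_pos hd2 _
    have hsqv : Real.sqrt v ^ 2 = v := Real.sq_sqrt hv0.le
    have hkey : Real.log (d/2) * (2 * (α * p)) + (u * Real.log u - u)
        + 2 * (v * Real.log v - v) - (w * Real.log w - w) = Real.log F * p := by
      rw [hudef, hvdef, hwdef, hlogF,
        Real.log_mul (ne_of_gt h1α) (ne_of_gt hp0),
        Real.log_mul (ne_of_gt hα0) (ne_of_gt hp0),
        Real.log_mul (ne_of_gt h1α') (ne_of_gt hp0)]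
      ring
    have hprod : Real.exp (Real.log F * p)
        = Real.exp (Real.log (d/2) * (2*(α*p))) * Real.exp (u*Real.log u - u)
          * (Real.exp (v*Real.log v - v) * Real.exp (v*Real.log v - v))
          / Real.exp (w*Real.log w - w) := by
      rw [← hkey, show Real.log (d/2) * (2*(α*p)) + (u*Real.log u - u)
          + 2*(v*Real.log v - v) - (w*Real.log w - w)
        = ((Real.log (d/2) * (2*(α*p)) + (u*Real.log u - u))
          + ((v*Real.log v - v) + (v*Real.log v - v))) - (w*Real.log w - w) from by ring]
      rw [Real.exp_sub (((Real.log (d/2) * (2*(α*p)) + (u*Real.log u - u)))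
          + ((v*Real.log v - v) + (v*Real.log v - v))) (w*Real.log w - w)]
      rw [Real.exp_add (Real.log (d/2) * (2*(α*p)) + (u*Real.log u - u))
          ((v*Real.log v - v) + (v*Real.log v - v))]
      rw [Real.exp_add (Real.log (d/2) * (2*(α*p))) (u*Real.log u - u)]
      rw [Real.exp_add (v*Real.log v - v) (v*Real.log v - v)]
    rw [hXe, hprod]
    have hEw : Real.exp (w * Real.log w - w) ≠ 0 := Real.exp_ne_zero _
    have hsw : Real.sqrt w ≠ 0 := ne_of_gt (Real.sqrt_pos.mpr hw0)
    field_simp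
    ring_nf
    rw [Real.sq_sqrt (show (0:ℝ) ≤ α * p from by positivity)]
  rw [hexpand]
  have hFp : F ^ p = Real.exp (Real.log F * p) := Real.rpow_def_of_pos hFpos p
  rw [hFp]
  have hfrac : Real.sqrt u / Real.sqrt w ≤ 1 :=
    div_le_one_of_le₀ (Real.sqrt_le_sqrt huw) (Real.sqrt_nonneg w)
  have hvp : v ≤ p := by rw [hvdef]; nlinarith
  have hmid : (Real.sqrt u / Real.sqrt w) * v ≤ p := by
    calc (Real.sqrt u / Real.sqrt w) * v ≤ 1 * v :=
          mul_le_mul_of_nonneg_right hfrac hv0.le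
      _ = v := one_mul v
      _ ≤ p := hvp
  have := mul_le_mul_of_nonneg_right (mul_le_mul_of_nonneg_left hmid (by positivity : (0:ℝ) ≤ A^3/B))
    (le_of_lt (Real.exp_pos (Real.log F * p)))
  linarith [this]
end

section
/- For every real number d > 0 there exists α ∈ (0,1) such that F(d,α) < 1, where F(d,α) := (αd/2)^{2α} · (1−α)^{1−α} / (1+α)^{1+α}. Equivalently, the infimum of F(d,·) over (0,1) is strictly less than 1. -/
/-- For every `d > 0` there is `α ∈ (0,1)` with `F(d,α) < 1`, where
`F(d,α) = (αd/2)^{2α}·(1−α)^{1−α}/(1+α)^{1+α}`; equivalently, the infimum of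
`F(d,·)` over `(0,1)` is strictly less than `1`. -/
theorem hp_rate_function_lt_one (d : ℝ) (hd : 0 < d) :
    ∃ α ∈ Set.Ioo (0 : ℝ) 1,
      (α * d / 2) ^ (2 * α) * (1 - α) ^ (1 - α) / (1 + α) ^ (1 + α) < 1 := by
  set α : ℝ := min (1 / d) (1 / 2) with hα
  have hα0 : 0 < α := lt_min (by positivity) (by norm_num)
  have hαh : α ≤ 1 / 2 := min_le_right _ _
  have hα1 : α < 1 := lt_of_le_of_lt hαh (by norm_num)
  refine ⟨α, ⟨hα0, hα1⟩, ?_⟩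
  have hbase : α * d / 2 < 1 := by
    have h1 : α * d ≤ 1 := by
      have := min_le_left (1 / d) (1 / 2)
      calc α * d ≤ (1 / d) * d := by nlinarith
        _ = 1 := by field_simp
    linarith
  have hbase0 : 0 < α * d / 2 := by positivity
  have h1 : (α * d / 2) ^ (2 * α) < 1 :=
    Real.rpow_lt_one hbase0.le hbase (by positivity)
  have h2 : (1 - α) ^ (1 - α) ≤ 1 :=
    Real.rpow_le_one (by linarith) (by linarith) (by linarith)
  have h3 : (1 : ℝ) ≤ (1 + α) ^ (1 + α) :=
    Real.one_le_rpow (by linarith) (by linarith)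
  have hp1 : (0:ℝ) ≤ (α * d / 2) ^ (2 * α) := Real.rpow_nonneg hbase0.le _
  have hp2 : (0:ℝ) ≤ (1 - α) ^ (1 - α) := Real.rpow_nonneg (by linarith) _
  calc (α * d / 2) ^ (2 * α) * (1 - α) ^ (1 - α) / (1 + α) ^ (1 + α)
      ≤ (α * d / 2) ^ (2 * α) * (1 - α) ^ (1 - α) / 1 := by
        apply div_le_div_of_nonneg_left (by positivity) one_pos h3
    _ = (α * d / 2) ^ (2 * α) * (1 - α) ^ (1 - α) := by ring
    _ ≤ (α * d / 2) ^ (2 * α) * 1 := by nlinarith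
    _ < 1 := by linarith
end
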